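/- arXiv:1805.07964 — 5 statements merged into one kernel-verified Lean document; each statement's English description precedes it below -/
import Mathlib

section
/- Let α, c₁, c₂ be positive real constants, let ξ : [0,∞) → (0,∞) be a nonincreasing differentiable function, let h : [0,∞) → [0,∞) be continuous, and let F : [0,∞) → [0,∞) be differentiable and satisfy F'(t) ≤ -c₁ ξ(t)^{α+1} F(t)^{α+1} + c₂ h(t)^{α+1} for all t ≥ 0. Then there exists a constant C > 0 such that for all t ≥ 0, F(t) ≤ C (1+t)^{-1/α} ξ(t)^{-(α+1)/α} · (1 + ∫₀ᵗ (1+s)^{1/α} ξ(s)^{(α+1)/α} h(s)^{α+1} ds). -/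
open MeasureTheory Set

set_option maxHeartbeats 1600000 in
/-- Lemma 1: differential-inequality decay lemma. -/
theorem stmt_0 (α c₁ c₂ : ℝ) (hα : 0 < α) (hc₁ : 0 < c₁) (hc₂ : 0 < c₂)
    (ξ h F : ℝ → ℝ)
    (hξpos : ∀ t, 0 ≤ t → 0 < ξ t)
    (hξanti : AntitoneOn ξ (Set.Ici 0))
    (hξdiff : ∀ t ∈ Set.Ici (0:ℝ), DifferentiableWithinAt ℝ ξ (Set.Ici 0) t)
    (hhcont : ContinuousOn h (Set.Ici 0))
    (hhnonneg : ∀ t, 0 ≤ t → 0 ≤ h t)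
    (hFnonneg : ∀ t, 0 ≤ t → 0 ≤ F t)
    (hFdiff : ∀ t ∈ Set.Ici (0:ℝ), DifferentiableWithinAt ℝ F (Set.Ici 0) t)
    (hineq : ∀ t, 0 ≤ t →
      derivWithin F (Set.Ici 0) t
        ≤ -c₁ * (ξ t) ^ (α + 1) * (F t) ^ (α + 1) + c₂ * (h t) ^ (α + 1)) :
    ∃ C > 0, ∀ t, 0 ≤ t →
      F t ≤ C * (1 + t) ^ (-(1 / α)) * (ξ t) ^ (-((α + 1) / α)) *
        (1 + ∫ s in (0:ℝ)..t, (1 + s) ^ (1 / α) * (ξ s) ^ ((α + 1) / α) * (h s) ^ (α + 1)) := by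
  have hα' : α ≠ 0 := hα.ne'
  have hα1 : (0:ℝ) < α + 1 := by linarith
  set C : ℝ := max (max c₂ ((2 / (c₁ * α)) ^ (1/α))) ((F 0 + 1) * (ξ 0) ^ ((α+1)/α)) with hCdef
  have hpow_pos : (0:ℝ) < (2 / (c₁ * α)) ^ (1/α) :=
    Real.rpow_pos_of_pos (by positivity) _
  have hCpos : 0 < C := lt_of_lt_of_le hpow_pos ((le_max_right _ _).trans (le_max_left _ _))
  have hCc₂ : c₂ ≤ C := (le_max_left _ _).trans (le_max_left _ _)
  have hC0 : (F 0 + 1) * (ξ 0) ^ ((α+1)/α) ≤ C := le_max_right _ _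
  have hCα : 2 / α ≤ c₁ * C ^ α := by
    have h1 : (2 / (c₁ * α)) ^ (1/α) ≤ C := (le_max_right _ _).trans (le_max_left _ _)
    have h2 : ((2 / (c₁ * α)) ^ (1/α)) ^ α ≤ C ^ α :=
      Real.rpow_le_rpow (Real.rpow_nonneg (by positivity) _) h1 hα.le
    have h3 : ((2 / (c₁ * α)) ^ (1/α)) ^ α = 2 / (c₁ * α) := by
      rw [← Real.rpow_mul (by positivity), one_div_mul_cancel hα', Real.rpow_one]
    rw [h3] at h2
    rw [div_le_iff₀ (by positivity)] at h2
    rw [div_le_iff₀ hα]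
    nlinarith
  clear_value C
  -- derivative of ξ is nonpositive
  have hξ'le : ∀ x, 0 ≤ x → derivWithin ξ (Set.Ici 0) x ≤ 0 := by
    intro x hx
    by_contra hpos
    push_neg at hpos
    have hd : HasDerivWithinAt ξ (derivWithin ξ (Set.Ici 0) x) (Set.Ici 0) x :=
      (hξdiff x hx).hasDerivWithinAt
    have hd2 : HasDerivWithinAt ξ (derivWithin ξ (Set.Ici 0) x) (Set.Ioi x) x :=
      hd.mono (fun y hy => hx.trans (le_of_lt hy))
    have hslope := hasDerivWithinAt_iff_tendsto_slope.mp hd2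
    have hIoi : Set.Ioi x \ {x} = Set.Ioi x := by
      ext y; simp only [Set.mem_diff, Set.mem_Ioi, Set.mem_singleton_iff]
      exact ⟨fun hy => hy.1, fun hy => ⟨hy, ne_of_gt hy⟩⟩
    rw [hIoi] at hslope
    have hev : ∀ᶠ y in nhdsWithin x (Set.Ioi x), 0 < slope ξ x y :=
      hslope (Ioi_mem_nhds hpos)
    obtain ⟨y, hy2, hy⟩ := (hev.and eventually_mem_nhdsWithin).exists
    have hyx : x < y := hy
    have : ξ y ≤ ξ x := hξanti hx (hx.trans hyx.le) hyx.le
    rw [slope_def_field] at hy2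
    have := div_pos_iff.mp hy2
    rcases this with ⟨h1, _⟩ | ⟨_, h2⟩
    · linarith
    · linarith
  have hξc : ContinuousOn ξ (Set.Ici 0) := fun u hu => (hξdiff u hu).continuousWithinAt
  set w : ℝ → ℝ := fun s => (1 + s) ^ (1 / α) * (ξ s) ^ ((α + 1) / α) * (h s) ^ (α + 1)
    with hwdef
  clear_value w
  have hwc : ContinuousOn w (Set.Ici 0) := by
    rw [hwdef]
    refine ContinuousOn.mul (ContinuousOn.mul ?_ ?_) ?_
    · exact (continuousOn_const.add continuousOn_id).rpow_const
        (fun u hu => Or.inl (by have : (0:ℝ) ≤ u := hu; show (1:ℝ) + u ≠ 0; positivity))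
    · exact hξc.rpow_const (fun u hu => Or.inl (hξpos u hu).ne')
    · exact hhcont.rpow_const (fun u hu => Or.inr hα1.le)
  have hwnn : ∀ s, 0 ≤ s → 0 ≤ w s := by
    intro s hs
    rw [hwdef]
    have h1 : (0:ℝ) ≤ 1 + s := by linarith
    exact mul_nonneg (mul_nonneg (Real.rpow_nonneg h1 _)
      (Real.rpow_nonneg (hξpos s hs).le _)) (Real.rpow_nonneg (hhnonneg s hs) _)
  have hint : ∀ x : ℝ, 0 ≤ x → IntervalIntegrable w volume 0 x := by
    intro x hx
    exact (hwc.mono (by rw [Set.uIcc_of_le hx]; exact Set.Icc_subset_Ici_self)).intervalIntegrable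
  set H : ℝ → ℝ := fun u => ∫ s in (0:ℝ)..u, w s with hHdef
  clear_value H
  have hHnn : ∀ x, 0 ≤ x → 0 ≤ H x := by
    intro x hx
    rw [hHdef]
    exact intervalIntegral.integral_nonneg hx (fun s hs => hwnn s hs.1)
  have hHd : ∀ x : ℝ, 0 ≤ x → HasDerivWithinAt H (w x) (Set.Ici x) x := by
    intro x hx
    rw [hHdef]
    have hmeas : StronglyMeasurableAtFilter w (nhdsWithin x (Set.Ioi x)) volume :=
      ⟨Set.Ici 0, Filter.mem_of_superset self_mem_nhdsWithin
        (fun y hy => hx.trans (le_of_lt hy)),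
        (hwc.aestronglyMeasurable measurableSet_Ici)⟩
    exact intervalIntegral.integral_hasDerivWithinAt_right (hint x hx) hmeas
      ((hwc x hx).mono (fun y hy => hx.trans (le_of_lt hy)))
  set B : ℝ → ℝ := fun u => C * (1 + u) ^ (-(1 / α)) * (ξ u) ^ (-((α + 1) / α)) * (1 + H u)
    with hBdef
  clear_value B
  -- initial condition
  have hξ0 : 0 < ξ 0 := hξpos 0 le_rfl
  have hF0B : F 0 ≤ B 0 := by
    have hH0 : H 0 = 0 := by rw [hHdef]; exact intervalIntegral.integral_same
    have hB0 : B 0 = C * (ξ 0) ^ (-((α+1)/α)) := by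
      simp [hBdef, hH0, Real.one_rpow]
    have u3 : (ξ 0) ^ ((α+1)/α) * (ξ 0) ^ (-((α+1)/α)) = 1 := by
      rw [← Real.rpow_add hξ0]; simp
    have hx0q : (0:ℝ) < (ξ 0) ^ (-((α+1)/α)) := Real.rpow_pos_of_pos hξ0 _
    calc F 0 ≤ F 0 + 1 := by linarith
      _ = (F 0 + 1) * ((ξ 0) ^ ((α+1)/α) * (ξ 0) ^ (-((α+1)/α))) := by rw [u3, mul_one]
      _ = ((F 0 + 1) * (ξ 0) ^ ((α+1)/α)) * (ξ 0) ^ (-((α+1)/α)) := by ring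
      _ ≤ C * (ξ 0) ^ (-((α+1)/α)) := mul_le_mul_of_nonneg_right hC0 hx0q.le
      _ = B 0 := hB0.symm
  -- main claim
  have key : ∀ T, 0 ≤ T → F T ≤ B T := by
    intro T hT
    have hHcont : ContinuousOn H (Set.Icc 0 T) := by
      have := intervalIntegral.continuousOn_primitive_interval' (hint T hT)
        (Set.left_mem_uIcc)
      rw [Set.uIcc_of_le hT] at this
      rw [hHdef]
      exact this
    have hFcont : ContinuousOn F (Set.Ici 0) := fun u hu => (hFdiff u hu).continuousWithinAt
    have hFc : ContinuousOn F (Set.Icc 0 T) := hFcont.mono Set.Icc_subset_Ici_self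
    have hBc : ContinuousOn B (Set.Icc 0 T) := by
      rw [hBdef]
      refine ContinuousOn.mul (ContinuousOn.mul (ContinuousOn.mul continuousOn_const ?_) ?_)
        (continuousOn_const.add hHcont)
      · exact (continuousOn_const.add continuousOn_id).rpow_const
          (fun u hu => Or.inl (by have : (0:ℝ) ≤ u := hu.1; show (1:ℝ) + u ≠ 0; positivity))
      · exact (hξc.mono Set.Icc_subset_Ici_self).rpow_const
          (fun u hu => Or.inl (hξpos u hu.1).ne')
    have hF'd : ∀ x ∈ Set.Ico (0:ℝ) T, HasDerivWithinAt F (derivWithin F (Set.Ici 0) x)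
        (Set.Ici x) x := fun x hx =>
      ((hFdiff x hx.1).hasDerivWithinAt).mono (Set.Ici_subset_Ici.mpr hx.1)
    -- the derivative of B
    set B' : ℝ → ℝ := fun x =>
      C * (1 * (-(1/α)) * (1 + x) ^ (-(1/α) - 1)) * (ξ x) ^ (-((α+1)/α)) * (1 + H x)
      + C * (1 + x) ^ (-(1/α)) *
          (derivWithin ξ (Set.Ici 0) x * (-((α+1)/α)) * (ξ x) ^ (-((α+1)/α) - 1)) * (1 + H x)
      + C * (1 + x) ^ (-(1/α)) * (ξ x) ^ (-((α+1)/α)) * w x with hB'def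
    clear_value B'
    have hB'd : ∀ x ∈ Set.Ico (0:ℝ) T, HasDerivWithinAt B (B' x) (Set.Ici x) x := by
      intro x hx
      have hx0 : (0:ℝ) ≤ x := hx.1
      have h1x : (0:ℝ) < 1 + x := by linarith
      have hg1 : HasDerivAt (fun u : ℝ => (1+u) ^ (-(1/α)))
          (1 * (-(1/α)) * (1+x) ^ (-(1/α) - 1)) x :=
        ((hasDerivAt_id x).const_add 1).rpow_const (Or.inl h1x.ne')
      have hg2 : HasDerivWithinAt (fun u => (ξ u) ^ (-((α+1)/α)))
          (derivWithin ξ (Set.Ici 0) x * (-((α+1)/α)) * (ξ x) ^ (-((α+1)/α) - 1))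
          (Set.Ici 0) x :=
        ((hξdiff x hx0).hasDerivWithinAt).rpow_const (Or.inl (hξpos x hx0).ne')
      have hd1 : HasDerivWithinAt (fun u : ℝ => C * (1+u) ^ (-(1/α)))
          (C * (1 * (-(1/α)) * (1+x) ^ (-(1/α) - 1))) (Set.Ici x) x :=
        (hg1.const_mul C).hasDerivWithinAt
      have hd2 := hd1.mul (hg2.mono (Set.Ici_subset_Ici.mpr hx0))
      have hd3 := hd2.mul ((hHd x hx0).const_add 1)
      simp only [hBdef, hB'def]
      simp only [Pi.mul_def] at hd3
      refine hd3.congr_deriv ?_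
      ring
    -- bound at touching points
    have hbound : ∀ x ∈ Set.Ico (0:ℝ) T, F x = B x →
        derivWithin F (Set.Ici 0) x < B' x := by
      intro x hx hFB
      have hx0 : (0:ℝ) ≤ x := hx.1
      have h1x : (0:ℝ) < 1 + x := by linarith
      have hξx : 0 < ξ x := hξpos x hx0
      have hKnn : (0:ℝ) ≤ H x := hHnn x hx0
      have hK1 : (1:ℝ) ≤ 1 + H x := by linarith
      set A1 : ℝ := (1+x) ^ (-(1/α)) with hA1
      set A1' : ℝ := (1+x) ^ (-(1/α) - 1) with hA1'
      set A2 : ℝ := (ξ x) ^ (-((α+1)/α)) with hA2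
      set K : ℝ := 1 + H x with hK
      clear_value A1 A1' A2 K
      have hA1pos : 0 < A1 := by rw [hA1]; exact Real.rpow_pos_of_pos h1x _
      have hA1'pos : 0 < A1' := by rw [hA1']; exact Real.rpow_pos_of_pos h1x _
      have hA2pos : 0 < A2 := by rw [hA2]; exact Real.rpow_pos_of_pos hξx _
      have hKpos : (0:ℝ) < K := by rw [hK]; linarith
      have hBx : B x = C * A1 * A2 * K := by
        simp only [hBdef, hA1, hA2, hK]
      -- the key algebraic inequality
      have e1 : (C * A1 * A2 * K) ^ (α+1)
          = C^(α+1) * A1^(α+1) * A2^(α+1) * K^(α+1) := by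
        rw [Real.mul_rpow (mul_nonneg (mul_nonneg hCpos.le hA1pos.le) hA2pos.le) hKpos.le,
            Real.mul_rpow (mul_nonneg hCpos.le hA1pos.le) hA2pos.le,
            Real.mul_rpow hCpos.le hA1pos.le]
      have e2 : A1^(α+1) = A1' := by
        rw [hA1, hA1', ← Real.rpow_mul h1x.le]
        congr 1
        field_simp
        ring
      have e3 : (ξ x) ^ (α+1) * A2^(α+1) = A2 := by
        rw [hA2, ← Real.rpow_mul hξx.le, ← Real.rpow_add hξx]
        congr 1
        field_simp
        ring
      have e4 : K ≤ K^(α+1) := by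
        calc K = K^(1:ℝ) := (Real.rpow_one _).symm
          _ ≤ K^(α+1) := Real.rpow_le_rpow_of_exponent_le hK1 (by linarith)
      have e5 : c₁ * (ξ x) ^ (α+1) * (B x)^(α+1)
          = c₁ * C^(α+1) * A1' * A2 * K^(α+1) := by
        calc c₁ * (ξ x) ^ (α+1) * (B x)^(α+1)
            = c₁ * C^(α+1) * A1^(α+1) * ((ξ x)^(α+1) * A2^(α+1)) * K^(α+1) := by
              rw [hBx, e1]; ring
          _ = c₁ * C^(α+1) * A1' * A2 * K^(α+1) := by rw [e2, e3]
      have h4 : C / α < c₁ * C^(α+1) := by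
        have hCa1 : C^(α+1) = C^α * C := by
          rw [Real.rpow_add hCpos, Real.rpow_one]
        have hCα3 : 0 < C / α := div_pos hCpos hα
        rw [hCa1]
        have h1 : 2/α * C ≤ c₁ * C^α * C := mul_le_mul_of_nonneg_right hCα hCpos.le
        have h2 : 2/α * C = 2 * (C/α) := by ring
        have h3 : c₁ * C^α * C = c₁ * (C^α * C) := by ring
        linarith
      have key2 : (C/α) * (A1' * A2 * K) < c₁ * (ξ x) ^ (α+1) * (B x)^(α+1) := by
        have hpos : 0 < A1' * A2 * K := mul_pos (mul_pos hA1'pos hA2pos) hKpos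
        have hCC : 0 < C ^ (α+1) := Real.rpow_pos_of_pos hCpos _
        have hcoef : 0 ≤ c₁ * C^(α+1) * A1' * A2 :=
          (mul_pos (mul_pos (mul_pos hc₁ hCC) hA1'pos) hA2pos).le
        have h5 : c₁ * C^(α+1) * A1' * A2 * K ≤ c₁ * C^(α+1) * A1' * A2 * K^(α+1) :=
          mul_le_mul_of_nonneg_left e4 hcoef
        have h6 : (C/α) * (A1' * A2 * K) < (c₁ * C^(α+1)) * (A1' * A2 * K) :=
          mul_lt_mul_of_pos_right h4 hpos
        rw [e5]
        nlinarith [h5, h6]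
      -- lower bound for B' x
      have hterm2 : 0 ≤ C * A1 *
          (derivWithin ξ (Set.Ici 0) x * (-((α+1)/α)) * (ξ x) ^ (-((α+1)/α) - 1)) * K := by
        have hm : 0 ≤ derivWithin ξ (Set.Ici 0) x * (-((α+1)/α)) :=
          mul_nonneg_of_nonpos_of_nonpos (hξ'le x hx0) (by
            have : 0 < (α+1)/α := by positivity
            linarith)
        have hp : 0 ≤ (ξ x) ^ (-((α+1)/α) - 1) := (Real.rpow_pos_of_pos hξx _).le
        have := mul_nonneg (mul_nonneg (mul_nonneg (mul_nonneg hCpos.le hA1pos.le) hm) hp) hKpos.le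
        calc (0:ℝ) ≤ C * A1 * (derivWithin ξ (Set.Ici 0) x * (-((α+1)/α))) *
            (ξ x) ^ (-((α+1)/α) - 1) * K := this
          _ = C * A1 * (derivWithin ξ (Set.Ici 0) x * (-((α+1)/α)) *
              (ξ x) ^ (-((α+1)/α) - 1)) * K := by ring
      have u1 : A1 * (1+x)^(1/α) = 1 := by
        rw [hA1, ← Real.rpow_add h1x, neg_add_cancel, Real.rpow_zero]
      have u2 : A2 * (ξ x)^((α+1)/α) = 1 := by
        rw [hA2, ← Real.rpow_add hξx, neg_add_cancel, Real.rpow_zero]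
      have hterm3 : C * A1 * A2 * w x = C * (h x)^(α+1) := by
        rw [hwdef]
        calc C * A1 * A2 * ((1+x)^(1/α) * (ξ x)^((α+1)/α) * (h x)^(α+1))
            = C * (A1 * (1+x)^(1/α)) * (A2 * (ξ x)^((α+1)/α)) * (h x)^(α+1) := by ring
          _ = C * (h x)^(α+1) := by rw [u1, u2]; ring
      have hB'eq : B' x = -(C/α) * (A1' * A2 * K)
          + C * A1 * (derivWithin ξ (Set.Ici 0) x * (-((α+1)/α)) *
              (ξ x) ^ (-((α+1)/α) - 1)) * K
          + C * (h x)^(α+1) := by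
        simp only [hB'def]
        rw [← hterm3, ← hA1, ← hA1', ← hA2, ← hK]
        ring
      have hB'ge : -(C/α) * (A1' * A2 * K) + C * (h x)^(α+1) ≤ B' x := by
        rw [hB'eq]; linarith [hterm2]
      -- combine
      have hF' := hineq x hx0
      rw [hFB] at hF'
      have hhx : 0 ≤ (h x)^(α+1) := Real.rpow_nonneg (hhnonneg x hx0) _
      have hc2C : c₂ * (h x)^(α+1) ≤ C * (h x)^(α+1) :=
        mul_le_mul_of_nonneg_right hCc₂ hhx
      calc derivWithin F (Set.Ici 0) x
          ≤ -c₁ * (ξ x) ^ (α+1) * (B x) ^ (α+1) + c₂ * (h x)^(α+1) := hF'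
        _ < -(C/α) * (A1' * A2 * K) + c₂ * (h x)^(α+1) := by nlinarith [key2]
        _ ≤ -(C/α) * (A1' * A2 * K) + C * (h x)^(α+1) := by linarith
        _ ≤ B' x := hB'ge
    have := image_le_of_deriv_right_lt_deriv_boundary' hFc hF'd hF0B hBc hB'd hbound
    exact this (Set.right_mem_Icc.mpr hT)
  refine ⟨C, hCpos, fun t ht => ?_⟩
  have hkt := key t ht
  simp only [hBdef, hHdef, hwdef] at hkt ⊢
  exact hkt
end

section
/- Let α, c₁ be positive real constants, let k : [0,∞) → [0,∞) be continuous, and let φ : [0,∞) → [0,∞) be differentiable and satisfy φ'(t) ≤ -c₁ φ(t)^{α+1} + k(t) for all t ≥ 0. Then there exists a constant C > 0 such that for all t ≥ 0, φ(t) ≤ C (1+t)^{-1/α} · (1 + ∫₀ᵗ (1+s)^{1/α} k(s) ds). -/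
open MeasureTheory Set Filter Topology

/-- Comparison lemma (Ge): from φ' ≤ -c₁ φ^{α+1} + k one gets an explicit
polynomial decay bound. -/
theorem stmt_2 (α c₁ : ℝ) (hα : 0 < α) (hc₁ : 0 < c₁)
    (k φ : ℝ → ℝ)
    (hkcont : ContinuousOn k (Set.Ici 0))
    (hknonneg : ∀ t, 0 ≤ t → 0 ≤ k t)
    (hφnonneg : ∀ t, 0 ≤ t → 0 ≤ φ t)
    (hφdiff : ∀ t ∈ Set.Ici (0:ℝ), DifferentiableWithinAt ℝ φ (Set.Ici 0) t)
    (hineq : ∀ t, 0 ≤ t →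
      derivWithin φ (Set.Ici 0) t ≤ -c₁ * (φ t) ^ (α + 1) + k t) :
    ∃ C > 0, ∀ t, 0 ≤ t →
      φ t ≤ C * (1 + t) ^ (-(1 / α)) *
        (1 + ∫ s in (0:ℝ)..t, (1 + s) ^ (1 / α) * k s) := by
  set f : ℝ → ℝ := fun s => (1 + max s 0) ^ (1/α) * k (max s 0) with hf_def
  have hkt : Continuous fun s : ℝ => k (max s 0) := by
    rw [← continuousOn_univ]
    exact hkcont.comp ((continuous_id.max continuous_const).continuousOn)
      (fun x _ => Set.mem_Ici.mpr (le_max_right _ _))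
  have hfcont : Continuous f := by
    apply Continuous.mul _ hkt
    apply Continuous.rpow_const
    · exact continuous_const.add (continuous_id.max continuous_const)
    · intro x; right; positivity
  have hfnonneg : ∀ s, 0 ≤ f s := fun s =>
    mul_nonneg (Real.rpow_nonneg (by positivity) _) (hknonneg _ (le_max_right _ _))
  set K : ℝ → ℝ := fun t => ∫ s in (0:ℝ)..t, f s with hK_def
  have hKderiv : ∀ t, HasDerivAt K (f t) t := fun t =>
    (hfcont.integral_hasStrictDerivAt 0 t).hasDerivAt
  have hKcont : Continuous K := by
    rw [continuous_iff_continuousAt]; exact fun t => (hKderiv t).continuousAt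
  have hKnonneg : ∀ t, 0 ≤ t → 0 ≤ K t := fun t ht =>
    intervalIntegral.integral_nonneg ht (fun u _ => hfnonneg u)
  set C : ℝ := 1 + φ 0 + ((α * c₁)⁻¹) ^ (1/α) with hC_def
  have hrp0 : (0:ℝ) ≤ ((α * c₁)⁻¹) ^ (1/α) := Real.rpow_nonneg (by positivity) _
  have hφ0 := hφnonneg 0 le_rfl
  have hC1 : 1 ≤ C := by rw [hC_def]; linarith
  have hC0 : (0:ℝ) < C := lt_of_lt_of_le one_pos hC1
  have hCφ : φ 0 < C := by rw [hC_def]; linarith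
  have hCα : 1/α < c₁ * C ^ α := by
    have h1 : ((α*c₁)⁻¹) ^ (1/α) < C := by rw [hC_def]; linarith
    have h2 : (((α*c₁)⁻¹) ^ (1/α)) ^ α < C ^ α := Real.rpow_lt_rpow hrp0 h1 hα
    rw [← Real.rpow_mul (by positivity), one_div, inv_mul_cancel₀ hα.ne',
      Real.rpow_one] at h2
    have h3 := mul_lt_mul_of_pos_left h2 hc₁
    have h4 : c₁ * (α*c₁)⁻¹ = 1/α := by
      rw [mul_comm α c₁, mul_inv, ← mul_assoc, mul_inv_cancel₀ hc₁.ne', one_mul, one_div]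
    rw [h4] at h3
    exact h3
  set g : ℝ → ℝ := fun t => C * ((1+t) ^ (-(1/α)) * (1 + K t)) with hg_def
  have hgcont : ContinuousOn g (Ici 0) := by
    apply ContinuousOn.mul continuousOn_const
    apply ContinuousOn.mul _ (continuous_const.add hKcont).continuousOn
    apply ContinuousOn.rpow_const (by fun_prop)
    intro x hx
    left
    have hx0 : (0:ℝ) ≤ x := hx
    positivity
  have hφcont : ContinuousOn φ (Ici 0) := fun x hx => (hφdiff x hx).continuousWithinAt
  have hDcont : ContinuousOn (fun x => φ x - g x) (Ici 0) := hφcont.sub hgcont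
  have main : ∀ t, 0 ≤ t → φ t ≤ g t := by
    by_contra hcon
    push_neg at hcon
    obtain ⟨t, ht0, hgt⟩ := hcon
    set S : Set ℝ := {x | 0 ≤ x ∧ g x < φ x} with hS_def
    have hSne : S.Nonempty := ⟨t, ht0, hgt⟩
    have hSbd : BddBelow S := ⟨0, fun x hx => hx.1⟩
    set t₀ := sInf S with ht₀def
    have ht₀mem : (0:ℝ) ≤ t₀ := le_csInf hSne (fun x hx => hx.1)
    have ht₀cl : t₀ ∈ closure S := csInf_mem_closure hSne hSbd
    have hle : ∀ x ∈ S, t₀ ≤ x := fun x hx => csInf_le hSbd hx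
    have hbelow : ∀ x, 0 ≤ x → x < t₀ → φ x ≤ g x := by
      intro x hx0 hxt
      by_contra h
      push_neg at h
      exact absurd (hle x ⟨hx0, h⟩) (not_le.mpr hxt)
    have hne : (𝓝[S] t₀).NeBot := mem_closure_iff_nhdsWithin_neBot.mp ht₀cl
    have hD₀ : g t₀ ≤ φ t₀ := by
      have htd : Tendsto (fun x => φ x - g x) (𝓝[S] t₀) (𝓝 (φ t₀ - g t₀)) :=
        (hDcont t₀ ht₀mem).mono (fun x hx => hx.1)
      have hev : ∀ᶠ x in 𝓝[S] t₀, 0 ≤ φ x - g x :=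
        eventually_nhdsWithin_of_forall (fun x hx => (sub_pos.mpr hx.2).le)
      have := ge_of_tendsto htd hev
      linarith
    rcases eq_or_lt_of_le ht₀mem with h0 | h0
    · -- t₀ = 0
      have hg0 : g 0 = C := by
        simp [hg_def, hK_def, intervalIntegral.integral_same]
      rw [← h0] at hD₀
      rw [hg0] at hD₀
      exact absurd hD₀ (not_le.mpr hCφ)
    · -- 0 < t₀
      have hDle : φ t₀ ≤ g t₀ := by
        have hcl2 : t₀ ∈ closure (Ico 0 t₀) := by
          rw [closure_Ico (ne_of_lt h0)]
          exact right_mem_Icc.mpr ht₀mem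
        have hne2 : (𝓝[Ico 0 t₀] t₀).NeBot := mem_closure_iff_nhdsWithin_neBot.mp hcl2
        have htd : Tendsto (fun x => φ x - g x) (𝓝[Ico 0 t₀] t₀) (𝓝 (φ t₀ - g t₀)) :=
          (hDcont t₀ ht₀mem).mono (fun x hx => hx.1)
        have hev : ∀ᶠ x in 𝓝[Ico 0 t₀] t₀, φ x - g x ≤ 0 :=
          eventually_nhdsWithin_of_forall
            (fun x hx => sub_nonpos.mpr (hbelow x hx.1 hx.2))
        have := le_of_tendsto htd hev
        linarith
      have hφt₀ : φ t₀ = g t₀ := le_antisymm hDle hD₀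
      have ht₀notS : t₀ ∉ S := fun h => absurd h.2 (not_lt.mpr hφt₀.le)
      set P : ℝ := 1 + t₀ with hP_def
      have hP : (0:ℝ) < P := by rw [hP_def]; linarith
      set Q : ℝ := 1 + K t₀ with hQ_def
      have hQ : (1:ℝ) ≤ Q := by
        have := hKnonneg t₀ ht₀mem
        rw [hQ_def]; linarith
      have hQ0 : (0:ℝ) < Q := lt_of_lt_of_le one_pos hQ
      -- derivative of g at t₀
      have hrpow1 : HasDerivAt (fun t : ℝ => (1+t) ^ (-(1/α)))
          (-(1/α) * P ^ (-(1/α) - 1)) t₀ := by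
        have hb : HasDerivAt (fun t : ℝ => 1 + t) 1 t₀ := by
          simpa using (hasDerivAt_id t₀).const_add 1
        have h := hb.rpow_const (p := -(1/α)) (Or.inl hP.ne')
        simpa using h
      set dg : ℝ := C * ((-(1/α) * P ^ (-(1/α) - 1)) * Q + P ^ (-(1/α)) * f t₀) with hdg_def
      have hgderiv : HasDerivAt g dg t₀ :=
        (hrpow1.mul ((hKderiv t₀).const_add 1)).const_mul C
      set dφ : ℝ := derivWithin φ (Ici 0) t₀ with hdφ_def
      have hφd : HasDerivWithinAt φ dφ (Ici 0) t₀ := (hφdiff t₀ ht₀mem).hasDerivWithinAt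
      have hDd : HasDerivWithinAt (fun x => φ x - g x) (dφ - dg) (Ici 0) t₀ :=
        hφd.sub hgderiv.hasDerivWithinAt
      -- dφ - dg ≥ 0
      have hd_nonneg : 0 ≤ dφ - dg := by
        have hslope := hasDerivWithinAt_iff_tendsto_slope.mp hDd
        have hsub : S ⊆ (Ici 0) \ {t₀} := by
          intro x hx
          refine ⟨hx.1, ?_⟩
          simp only [mem_singleton_iff]
          rintro rfl
          exact ht₀notS hx
        have hslope' : Tendsto (slope (fun x => φ x - g x) t₀) (𝓝[S] t₀) (𝓝 (dφ - dg)) :=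
          hslope.mono_left (nhdsWithin_mono _ hsub)
        have hev : ∀ᶠ x in 𝓝[S] t₀, 0 ≤ slope (fun x => φ x - g x) t₀ x := by
          apply eventually_nhdsWithin_of_forall
          intro x hx
          rw [slope_def_field]
          apply div_nonneg
          · have h1 : φ t₀ - g t₀ = 0 := by rw [hφt₀]; ring
            have h2 : 0 < φ x - g x := sub_pos.mpr hx.2
            linarith
          · have := hle x hx
            linarith
        exact ge_of_tendsto hslope' hev
      -- dφ - dg < 0
      have hφval : φ t₀ = C * (P ^ (-(1/α)) * Q) := by rw [hφt₀, hg_def]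
      have hpow : (φ t₀) ^ (α+1) = C ^ (α+1) * (P ^ (-(1/α) - 1) * Q ^ (α+1)) := by
        rw [hφval]
        rw [Real.mul_rpow hC0.le (by positivity),
          Real.mul_rpow (Real.rpow_nonneg hP.le _) (by positivity),
          ← Real.rpow_mul hP.le]
        have : -(1/α) * (α + 1) = -(1/α) - 1 := by field_simp; ring
        rw [this]
      have hPP : P ^ (-(1/α)) * P ^ (1/α) = 1 := by
        rw [← Real.rpow_add hP]
        simp
      have hft₀ : f t₀ = P ^ (1/α) * k t₀ := by
        rw [hf_def]
        simp only [max_eq_left ht₀mem]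
        rw [hP_def]
      have hdg_eq : dg = -(C * (1/α)) * (P ^ (-(1/α) - 1) * Q) + C * k t₀ := by
        rw [hdg_def, hft₀]
        have : P ^ (-(1/α)) * (P ^ (1/α) * k t₀) = k t₀ := by
          rw [← mul_assoc, hPP, one_mul]
        rw [mul_add, this]
        ring
      clear_value P Q C dφ dg
      have hkey : (C * (1/α)) * Q < c₁ * (C ^ (α+1) * Q ^ (α+1)) := by
        have hCs : C ^ (α+1) = C ^ α * C := by
          rw [Real.rpow_add hC0, Real.rpow_one]
        have hQs : Q ^ (α+1) = Q ^ α * Q := by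
          rw [Real.rpow_add hQ0, Real.rpow_one]
        have hQα : (1:ℝ) ≤ Q ^ α := Real.one_le_rpow hQ hα.le
        rw [hCs, hQs]
        have h1 : (1/α) * (C * Q) < (c₁ * C ^ α) * (C * Q) :=
          mul_lt_mul_of_pos_right hCα (by positivity)
        have h2 : (c₁ * C ^ α) * (C * Q) ≤ (c₁ * C ^ α) * (C * Q) * Q ^ α :=
          le_mul_of_one_le_right (by positivity) hQα
        linarith
      have hPe : (0:ℝ) < P ^ (-(1/α) - 1) := Real.rpow_pos_of_pos hP _
      have hd_neg : dφ - dg < 0 := by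
        have h1 := hineq t₀ ht₀mem
        rw [← hdφ_def, hpow] at h1
        rw [hdg_eq]
        have h2 : (C * (1/α)) * Q * P ^ (-(1/α) - 1) <
            c₁ * (C ^ (α+1) * Q ^ (α+1)) * P ^ (-(1/α) - 1) :=
          mul_lt_mul_of_pos_right hkey hPe
        have h3 : k t₀ ≤ C * k t₀ :=
          le_mul_of_one_le_left (hknonneg t₀ ht₀mem) hC1
        linarith
      linarith
  refine ⟨C, hC0, fun t ht => ?_⟩
  have h := main t ht
  have hKt : K t = ∫ s in (0:ℝ)..t, (1+s) ^ (1/α) * k s := by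
    apply intervalIntegral.integral_congr
    intro s hs
    rw [uIcc_of_le ht] at hs
    simp only [hf_def, max_eq_left hs.1]
  rw [hg_def] at h
  simp only at h
  rw [hKt] at h
  rw [mul_assoc]
  exact h
end

section
/- Let g : [0,∞) → (0,∞) be a differentiable nonincreasing function with ∫₀^∞ g(s) ds < ∞, let ξ : [0,∞) → (0,∞) be a differentiable nonincreasing function, and let p be a real number with 1 ≤ p < 3/2 such that g'(t) ≤ -ξ(t) g(t)^p for all t ≥ 0. Then for every real number σ with σ < 2 - p, the integral ∫₀^∞ ξ(t) g(t)^{1-σ} dt is finite. -/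
open MeasureTheory Set

/-- Lemma 2: under (H2)-(H3), ∫₀^∞ ξ(t) g(t)^{1-σ} dt < ∞ for all σ < 2 - p. -/
theorem stmt_3 (g ξ : ℝ → ℝ) (p : ℝ)
    (hgpos : ∀ t, 0 ≤ t → 0 < g t)
    (hganti : AntitoneOn g (Set.Ici 0))
    (hgdiff : ∀ t ∈ Set.Ici (0:ℝ), DifferentiableWithinAt ℝ g (Set.Ici 0) t)
    (hgint : IntegrableOn g (Set.Ioi 0))
    (hξpos : ∀ t, 0 ≤ t → 0 < ξ t)
    (hξanti : AntitoneOn ξ (Set.Ici 0))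
    (hξdiff : ∀ t ∈ Set.Ici (0:ℝ), DifferentiableWithinAt ℝ ξ (Set.Ici 0) t)
    (hp1 : 1 ≤ p) (hp2 : p < 3 / 2)
    (hg' : ∀ t, 0 ≤ t → derivWithin g (Set.Ici 0) t ≤ -(ξ t) * (g t) ^ p) :
    ∀ σ : ℝ, σ < 2 - p →
      IntegrableOn (fun t => ξ t * (g t) ^ (1 - σ)) (Set.Ioi 0) := by
  intro σ hσ
  set q : ℝ := 2 - σ - p with hq
  have hqpos : 0 < q := by simp only [hq]; linarith
  set f : ℝ → ℝ := fun t => ξ t * (g t) ^ (1 - σ) with hf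
  -- continuity of f on Ici 0
  have hgcont : ContinuousOn g (Ici 0) := fun x hx => (hgdiff x hx).continuousWithinAt
  have hξcont : ContinuousOn ξ (Ici 0) := fun x hx => (hξdiff x hx).continuousWithinAt
  have hfcont : ContinuousOn f (Ici 0) := by
    apply hξcont.mul
    exact hgcont.rpow_const (fun x hx => Or.inl (hgpos x hx).ne')
  -- f is integrable on each Ioc 0 n
  have hfi : ∀ n : ℕ, IntegrableOn f (Ioc 0 (n : ℝ)) := by
    intro n
    exact ((hfcont.mono (Icc_subset_Ici_self)).integrableOn_Icc).mono_set Ioc_subset_Icc_self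
  -- the derivative bound
  have key : ∀ n : ℕ, (∫ x in (0:ℝ)..(n:ℝ), f x) ≤ (g 0) ^ q / q := by
    intro n
    rcases Nat.eq_zero_or_pos n with h0 | hn
    · simp only [h0, Nat.cast_zero, intervalIntegral.integral_same]
      exact div_nonneg (Real.rpow_nonneg (hgpos 0 le_rfl).le _) hqpos.le
    have hn0 : (0:ℝ) ≤ n := n.cast_nonneg
    set G : ℝ → ℝ := fun t => -((g t) ^ q) / q with hG
    have hGcont : ContinuousOn G (Icc 0 (n:ℝ)) := by
      apply ContinuousOn.div_const
      apply ContinuousOn.neg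
      exact ((hgcont.mono Icc_subset_Ici_self).rpow_const
        (fun x hx => Or.inl (hgpos x hx.1).ne'))
    have hGd : ∀ x ∈ Ioo (0:ℝ) (n:ℝ), HasDerivWithinAt G
        (-(derivWithin g (Ici 0) x) * (g x) ^ (q - 1)) (Ioi x) x := by
      intro x hx
      have hx0 : (0:ℝ) < x := hx.1
      have hmem : Ici (0:ℝ) ∈ nhds x := Ici_mem_nhds hx0
      have hdg : DifferentiableAt ℝ g x := (hgdiff x hx0.le).differentiableAt hmem
      have hdw : derivWithin g (Ici 0) x = deriv g x := derivWithin_of_mem_nhds hmem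
      have h1 : HasDerivAt (fun t => (g t) ^ q) (deriv g x * q * (g x) ^ (q - 1)) x :=
        hdg.hasDerivAt.rpow_const (Or.inl (hgpos x hx0.le).ne')
      have h2 : HasDerivAt G (-(deriv g x * q * (g x) ^ (q - 1)) / q) x := (h1.neg).div_const q
      have : (-(deriv g x * q * (g x) ^ (q - 1)) / q) =
          -(derivWithin g (Ici 0) x) * (g x) ^ (q - 1) := by
        rw [hdw]; field_simp
      rw [this] at h2
      exact h2.hasDerivWithinAt
    have hφg : ∀ x ∈ Ioo (0:ℝ) (n:ℝ), f x ≤ -(derivWithin g (Ici 0) x) * (g x) ^ (q - 1) := by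
      intro x hx
      have hx0 : (0:ℝ) ≤ x := hx.1.le
      have hgx : 0 < g x := hgpos x hx0
      have hsplit : (g x) ^ (1 - σ) = (g x) ^ p * (g x) ^ (q - 1) := by
        rw [← Real.rpow_add hgx]
        norm_num [hq]
        ring_nf
      have hb : ξ x * (g x) ^ p ≤ -(derivWithin g (Ici 0) x) := by
        have := hg' x hx0
        linarith
      calc f x = (ξ x * (g x) ^ p) * (g x) ^ (q - 1) := by
              simp only [hf, hsplit]; ring
        _ ≤ -(derivWithin g (Ici 0) x) * (g x) ^ (q - 1) := by
              apply mul_le_mul_of_nonneg_right hb (Real.rpow_nonneg hgx.le _)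
    have hint : IntegrableOn f (Icc 0 (n:ℝ)) :=
      (hfcont.mono Icc_subset_Ici_self).integrableOn_Icc
    have := intervalIntegral.integral_le_sub_of_hasDeriv_right_of_le hn0 hGcont hGd hint hφg
    have hGn : G (n:ℝ) - G 0 ≤ (g 0) ^ q / q := by
      simp only [hG]
      have h1 : 0 ≤ (g (n:ℝ)) ^ q := Real.rpow_nonneg (hgpos _ hn0).le _
      have h2 : 0 ≤ (g 0) ^ q := Real.rpow_nonneg (hgpos 0 le_rfl).le _
      rw [div_sub_div_same, div_le_div_iff_of_pos_right hqpos]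
      linarith
    linarith
  -- nonnegativity: ∫ ‖f‖ = ∫ f on [0, n]
  have hnorm : ∀ n : ℕ, (∫ x in (0:ℝ)..(n:ℝ), ‖f x‖) ≤ (g 0) ^ q / q := by
    intro n
    have : (∫ x in (0:ℝ)..(n:ℝ), ‖f x‖) = ∫ x in (0:ℝ)..(n:ℝ), f x := by
      rw [intervalIntegral.integral_of_le n.cast_nonneg,
          intervalIntegral.integral_of_le n.cast_nonneg]
      apply setIntegral_congr_fun measurableSet_Ioc
      intro x hx
      exact Real.norm_of_nonneg (mul_nonneg (hξpos x hx.1.le).le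
        (Real.rpow_nonneg (hgpos x hx.1.le).le _))
    rw [this]; exact key n
  exact integrableOn_Ioi_of_intervalIntegral_norm_bounded ((g 0) ^ q / q) 0 hfi
    tendsto_natCast_atTop_atTop (Filter.Eventually.of_forall hnorm)
end

section
/- Let t > 0, let p > 1 be a real number, let g : [0,∞) → (0,∞) be differentiable and nonincreasing, let ξ : [0,∞) → (0,∞) be nonincreasing with g'(s) ≤ -ξ(s) g(s)^p for all s ≥ 0, and let w : [0,t] → [0,∞) be measurable with w and s ↦ (-g'(s)) w(s) integrable on [0,t]. Then ξ(t) ∫₀ᵗ g(s) w(s) ds ≤ ξ(0)^{(p-1)/p} · (∫₀ᵗ w(s) ds)^{(p-1)/p} · (∫₀ᵗ (-g'(s)) w(s) ds)^{1/p}. -/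
open MeasureTheory Set intervalIntegral

/-- Estimate (3.26) in abstract form:
ξ(t) ∫₀ᵗ g w ≤ ξ(0)^{(p-1)/p} (∫₀ᵗ w)^{(p-1)/p} (∫₀ᵗ (-g') w)^{1/p}. -/
theorem stmt_8 (t p : ℝ) (ht : 0 < t) (hp : 1 < p)
    (g ξ w : ℝ → ℝ)
    (hgpos : ∀ s, 0 ≤ s → 0 < g s)
    (hganti : AntitoneOn g (Set.Ici 0))
    (hgdiff : ∀ s ∈ Set.Ici (0:ℝ), DifferentiableWithinAt ℝ g (Set.Ici 0) s)
    (hξpos : ∀ s, 0 ≤ s → 0 < ξ s)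
    (hξanti : AntitoneOn ξ (Set.Ici 0))
    (hg' : ∀ s, 0 ≤ s → derivWithin g (Set.Ici 0) s ≤ -(ξ s) * (g s) ^ p)
    (hwnonneg : ∀ s ∈ Set.Icc 0 t, 0 ≤ w s)
    (hwmeas : AEMeasurable w (volume.restrict (Set.Icc 0 t)))
    (hwint : IntegrableOn w (Set.Icc 0 t))
    (hint : IntegrableOn
      (fun s => (-(derivWithin g (Set.Ici 0) s)) * w s) (Set.Icc 0 t)) :
    ξ t * ∫ s in (0:ℝ)..t, g s * w s
      ≤ (ξ 0) ^ ((p - 1) / p) * (∫ s in (0:ℝ)..t, w s) ^ ((p - 1) / p) *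
        (∫ s in (0:ℝ)..t, (-(derivWithin g (Set.Ici 0) s)) * w s) ^ (1 / p) := by
  set D : ℝ → ℝ := fun s => derivWithin g (Set.Ici 0) s with hDdef
  set q : ℝ := Real.conjExponent p with hqdef
  have hpq : p.HolderConjugate q := Real.HolderConjugate.conjExponent hp
  have hp0 : (0:ℝ) < p := hpq.pos
  have hq0 : (0:ℝ) < q := hpq.symm.pos
  have hp1 : (0:ℝ) ≤ p - 1 := by linarith
  have hqinv : 1 / q = (p - 1) / p := by
    rw [hqdef, Real.conjExponent]
    field_simp
  set μ := volume.restrict (Set.Icc (0:ℝ) t) with hμ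
  have hconv : ∀ f : ℝ → ℝ, (∫ s in (0:ℝ)..t, f s) = ∫ s, f s ∂μ := fun f => by
    rw [intervalIntegral.integral_of_le ht.le, hμ,
      MeasureTheory.integral_Icc_eq_integral_Ioc]
  rw [hconv, hconv, hconv]
  have hmem : ∀ᵐ s ∂μ, s ∈ Set.Icc (0:ℝ) t := ae_restrict_mem measurableSet_Icc
  have hξ00 : 0 < ξ 0 := hξpos 0 le_rfl
  have hg00 : 0 < g 0 := hgpos 0 le_rfl
  -- measurability
  have hgm : AEMeasurable g μ :=
    aemeasurable_restrict_of_antitoneOn measurableSet_Icc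
      (hganti.mono Set.Icc_subset_Ici_self)
  have hξm : AEMeasurable ξ μ :=
    aemeasurable_restrict_of_antitoneOn measurableSet_Icc
      (hξanti.mono Set.Icc_subset_Ici_self)
  set f1 : ℝ → ℝ := fun s => ξ s * g s * w s ^ (1/p) with hf1def
  set f2 : ℝ → ℝ := fun s => w s ^ (1/q) with hf2def
  have hf1m : AEMeasurable f1 μ := (hξm.mul hgm).mul (hwmeas.pow aemeasurable_const)
  have hf2m : AEMeasurable f2 μ := hwmeas.pow aemeasurable_const
  -- basic a.e. facts
  have hDneg : ∀ s, 0 ≤ s → 0 ≤ -(D s) := fun s hs => by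
    have h1 := hg' s hs
    have h2 : 0 < ξ s * g s ^ p :=
      mul_pos (hξpos s hs) (Real.rpow_pos_of_pos (hgpos s hs) p)
    nlinarith
  -- key pointwise bound for f1 ^ p
  have hkey : ∀ᵐ s ∂μ, f1 s ^ p ≤ ξ 0 ^ (p-1) * (-(D s) * w s) := by
    filter_upwards [hmem] with s hs
    have hs0 : (0:ℝ) ≤ s := hs.1
    have hξs := hξpos s hs0
    have hgs := hgpos s hs0
    have hws := hwnonneg s hs
    have hw1p : (0:ℝ) ≤ w s ^ (1/p) := Real.rpow_nonneg hws _
    have e1 : f1 s ^ p = ξ s ^ p * (g s ^ p) * w s := by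
      show (ξ s * g s * w s ^ (1/p)) ^ p = _
      rw [Real.mul_rpow (by positivity) hw1p, Real.mul_rpow hξs.le hgs.le,
        ← Real.rpow_mul hws, one_div_mul_cancel hp0.ne', Real.rpow_one]
    have e2 : ξ s ^ p = ξ s ^ (p-1) * ξ s := by
      nth_rewrite 1 [show p = (p-1)+1 by ring]
      rw [Real.rpow_add hξs, Real.rpow_one]
    have h3 : ξ s * g s ^ p ≤ -(D s) := by
      have := hg' s hs0
      simp only [hDdef]; linarith
    have h4 : ξ s ^ (p-1) ≤ ξ 0 ^ (p-1) :=
      Real.rpow_le_rpow hξs.le (hξanti Set.self_mem_Ici hs0 hs0) hp1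
    calc f1 s ^ p = ξ s ^ (p-1) * (ξ s * g s ^ p) * w s := by rw [e1, e2]; ring
      _ ≤ ξ 0 ^ (p-1) * (-(D s)) * w s := by
          apply mul_le_mul_of_nonneg_right _ hws
          exact mul_le_mul h4 h3 (by positivity) (Real.rpow_nonneg hξ00.le _)
      _ = ξ 0 ^ (p-1) * (-(D s) * w s) := by ring
  have hf1nonneg : 0 ≤ᵐ[μ] f1 := by
    filter_upwards [hmem] with s hs
    have := hξpos s hs.1; have := hgpos s hs.1
    have := Real.rpow_nonneg (hwnonneg s hs) (1/p)
    positivity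
  have hf2nonneg : 0 ≤ᵐ[μ] f2 := by
    filter_upwards [hmem] with s hs
    exact Real.rpow_nonneg (hwnonneg s hs) _
  -- integrability of f1 ^ p
  have hBint : Integrable (fun s => ξ 0 ^ (p-1) * (-(D s) * w s)) μ := by
    exact (hint.const_mul _ : Integrable _ μ)
  have hf1p_int : Integrable (fun s => f1 s ^ p) μ := by
    refine Integrable.mono' hBint
      ((hf1m.pow aemeasurable_const).aestronglyMeasurable) ?_
    filter_upwards [hkey, hf1nonneg] with s h1 h2
    rw [Real.norm_of_nonneg (Real.rpow_nonneg h2 _)]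
    exact h1
  -- Memℒp of f1 for exponent p
  have hofp_ne : ENNReal.ofReal p ≠ 0 := by
    simp [ENNReal.ofReal_eq_zero, not_le, hp0]
  have hf1Lp : MemLp f1 (ENNReal.ofReal p) μ := by
    have h1 : Integrable (fun s => ‖f1 s‖ ^ p) μ := by
      refine hf1p_int.congr ?_
      filter_upwards [hf1nonneg] with s h2
      rw [Real.norm_of_nonneg h2]
    have h2 : MemLp (fun s => ‖f1 s‖ ^ (ENNReal.ofReal p).toReal)
        (ENNReal.ofReal p / ENNReal.ofReal p) μ := by
      rw [ENNReal.toReal_ofReal hp0.le,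
        ENNReal.div_self hofp_ne ENNReal.ofReal_ne_top]
      exact (memLp_one_iff_integrable.mpr h1)
    exact (memLp_norm_rpow_iff hf1m.aestronglyMeasurable hofp_ne
      ENNReal.ofReal_ne_top).1 h2
  -- f2 ^ q = w a.e.
  have hf2q : (fun s => f2 s ^ q) =ᵐ[μ] w := by
    filter_upwards [hmem] with s hs
    show (w s ^ (1/q)) ^ q = w s
    rw [← Real.rpow_mul (hwnonneg s hs), one_div_mul_cancel hq0.ne', Real.rpow_one]
  have hofq_ne : ENNReal.ofReal q ≠ 0 := by
    simp [ENNReal.ofReal_eq_zero, not_le, hq0]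
  have hf2Lq : MemLp f2 (ENNReal.ofReal q) μ := by
    have h1 : Integrable (fun s => ‖f2 s‖ ^ q) μ := by
      refine (hwint.congr ?_)
      filter_upwards [hf2q, hf2nonneg] with s h2 h3
      rw [Real.norm_of_nonneg h3]
      exact h2.symm
    have h2 : MemLp (fun s => ‖f2 s‖ ^ (ENNReal.ofReal q).toReal)
        (ENNReal.ofReal q / ENNReal.ofReal q) μ := by
      rw [ENNReal.toReal_ofReal hq0.le,
        ENNReal.div_self hofq_ne ENNReal.ofReal_ne_top]
      exact (memLp_one_iff_integrable.mpr h1)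
    exact (memLp_norm_rpow_iff hf2m.aestronglyMeasurable hofq_ne
      ENNReal.ofReal_ne_top).1 h2
  -- Hölder
  have hHolder := MeasureTheory.integral_mul_le_Lp_mul_Lq_of_nonneg hpq
    hf1nonneg hf2nonneg hf1Lp hf2Lq
  -- ∫ f1*f2 = ∫ ξ g w
  have hE1 : (∫ s, f1 s * f2 s ∂μ) = ∫ s, ξ s * g s * w s ∂μ := by
    refine integral_congr_ae ?_
    filter_upwards [hmem] with s hs
    show ξ s * g s * w s ^ (1/p) * w s ^ (1/q) = ξ s * g s * w s
    have hsum : 1/p + 1/q = 1 := by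
      simpa [one_div] using hpq.inv_add_inv_eq_one
    rw [mul_assoc, ← Real.rpow_add' (hwnonneg s hs) (by rw [hsum]; norm_num),
      hsum, Real.rpow_one]
  have hE2 : (∫ s, f2 s ^ q ∂μ) = ∫ s, w s ∂μ := integral_congr_ae hf2q
  -- integrability of ξ g w and g w
  have hgw_int : Integrable (fun s => g s * w s) μ := by
    refine Integrable.mono' (hwint.const_mul (g 0))
      (hgm.mul hwmeas).aestronglyMeasurable ?_
    filter_upwards [hmem] with s hs
    have hgs := hgpos s hs.1
    have hws := hwnonneg s hs
    rw [Real.norm_of_nonneg (by positivity)]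
    exact mul_le_mul_of_nonneg_right (hganti Set.self_mem_Ici hs.1 hs.1) hws
  have hξgw_int : Integrable (fun s => ξ s * g s * w s) μ := by
    refine Integrable.mono' ((hwint.const_mul (ξ 0 * g 0)))
      ((hξm.mul hgm).mul hwmeas).aestronglyMeasurable ?_
    filter_upwards [hmem] with s hs
    have hgs := hgpos s hs.1
    have hξs := hξpos s hs.1
    have hws := hwnonneg s hs
    rw [Real.norm_of_nonneg (by positivity)]
    exact mul_le_mul_of_nonneg_right
      (mul_le_mul (hξanti Set.self_mem_Ici hs.1 hs.1)
        (hganti Set.self_mem_Ici hs.1 hs.1) hgs.le hξ00.le) hws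
  -- step 1: ξ t ∫ g w ≤ ∫ ξ g w
  have hstep1 : ξ t * ∫ s, g s * w s ∂μ ≤ ∫ s, ξ s * g s * w s ∂μ := by
    rw [← MeasureTheory.integral_const_mul]
    refine integral_mono_ae (hgw_int.const_mul _) hξgw_int ?_
    filter_upwards [hmem] with s hs
    have hgs := hgpos s hs.1
    have hws := hwnonneg s hs
    have hξts : ξ t ≤ ξ s := hξanti (Set.mem_Ici.mpr hs.1)
      (Set.mem_Ici.mpr (le_trans hs.1 hs.2)) hs.2
    calc ξ t * (g s * w s) ≤ ξ s * (g s * w s) :=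
          mul_le_mul_of_nonneg_right hξts (by positivity)
      _ = ξ s * g s * w s := by ring
  -- step 2: ∫ f1^p ≤ ξ0^{p-1} ∫ (-D) w
  have hIDw_nonneg : 0 ≤ ∫ s, -(D s) * w s ∂μ := by
    refine integral_nonneg_of_ae ?_
    filter_upwards [hmem] with s hs
    exact mul_nonneg (hDneg s hs.1) (hwnonneg s hs)
  have hIw_nonneg : 0 ≤ ∫ s, w s ∂μ := by
    refine integral_nonneg_of_ae ?_
    filter_upwards [hmem] with s hs
    exact hwnonneg s hs
  have hstep2 : (∫ s, f1 s ^ p ∂μ) ≤ ξ 0 ^ (p-1) * ∫ s, -(D s) * w s ∂μ := by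
    rw [← MeasureTheory.integral_const_mul]
    exact integral_mono_ae hf1p_int hBint hkey
  have hf1p_nonneg : 0 ≤ ∫ s, f1 s ^ p ∂μ := by
    refine integral_nonneg_of_ae ?_
    filter_upwards [hf1nonneg] with s hs
    exact Real.rpow_nonneg hs _
  -- assemble
  calc ξ t * ∫ s, g s * w s ∂μ ≤ ∫ s, ξ s * g s * w s ∂μ := hstep1
    _ = ∫ s, f1 s * f2 s ∂μ := hE1.symm
    _ ≤ (∫ s, f1 s ^ p ∂μ) ^ (1/p) * (∫ s, f2 s ^ q ∂μ) ^ (1/q) := hHolder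
    _ ≤ (ξ 0 ^ (p-1) * ∫ s, -(D s) * w s ∂μ) ^ (1/p) *
          (∫ s, w s ∂μ) ^ (1/q) := by
        rw [hE2]
        refine mul_le_mul_of_nonneg_right ?_ (Real.rpow_nonneg hIw_nonneg _)
        exact Real.rpow_le_rpow hf1p_nonneg hstep2 (by positivity)
    _ = ξ 0 ^ ((p-1)/p) * (∫ s, w s ∂μ) ^ ((p-1)/p) *
          (∫ s, -(D s) * w s ∂μ) ^ (1/p) := by
        rw [Real.mul_rpow (Real.rpow_nonneg hξ00.le _) hIDw_nonneg,
          ← Real.rpow_mul hξ00.le, mul_one_div, hqinv]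
        ring
end

section
/- Let r > 1 and α₁, C₀, β₁, β₂ > 0 be real constants. Let E : [0,∞) → [0,∞) be nonincreasing and continuously differentiable, let ξ : [0,∞) → (0,∞) be nonincreasing and differentiable, let h : [0,∞) → [0,∞) be continuous, and let I : [0,∞) → ℝ be differentiable with β₁ E(t) ≤ I(t) ≤ β₂ E(t) for all t ≥ 0. Assume that ξ(t) I'(t) ≤ -α₁ ξ(t) E(t) + C₀ (-E'(t))^{1/r} + C₀ h(t) for all t ≥ 0. Then there exists a constant C > 0 such that for all t ≥ 0, E(t) ≤ C (1+t)^{-1/(r-1)} ξ(t)^{-r/(r-1)} · (1 + ∫₀ᵗ (1+s)^{1/(r-1)} ξ(s)^{r/(r-1)} h(s)^r ds). -/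
open MeasureTheory Set intervalIntegral

lemma aux_deriv_nonpos {f : ℝ → ℝ} {f' x : ℝ} (hx : (0:ℝ) ≤ x)
    (hf : HasDerivWithinAt f f' (Set.Ici 0) x) (ha : AntitoneOn f (Set.Ici 0)) : f' ≤ 0 := by
  have hsub : Set.Ioi x ⊆ Set.Ici (0:ℝ) := fun y hy => le_trans hx (le_of_lt hy)
  have h2 : HasDerivWithinAt f f' (Set.Ioi x) x := hf.mono hsub
  rw [hasDerivWithinAt_iff_tendsto_slope] at h2
  have hd : Set.Ioi x \ {x} = Set.Ioi x := Set.diff_singleton_eq_self (by simp)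
  rw [hd] at h2
  have : ∀ᶠ y in nhdsWithin x (Set.Ioi x), slope f x y ≤ 0 := by
    filter_upwards [self_mem_nhdsWithin] with y hy
    have hxy : x < y := hy
    have hle : f y ≤ f x := ha hx (hsub hy) hxy.le
    rw [slope_def_field]
    exact div_nonpos_of_nonpos_of_nonneg (by linarith) (by linarith)
  exact le_of_tendsto h2 this

lemma aux_young {r : ℝ} (hr : 1 < r) {ε : ℝ} (hε : 0 < ε) :
    ∃ K > 0, ∀ x y : ℝ, 0 ≤ x → 0 ≤ y → x ^ (r-1) * y ≤ ε * x ^ r + K * y ^ r := by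
  have hr1 : (0:ℝ) < r - 1 := by linarith
  have hr0 : (0:ℝ) < r := by linarith
  set p : ℝ := r / (r - 1) with hp
  have hp1 : 1 < p := by
    rw [hp, lt_div_iff₀ hr1]; linarith
  have hp0 : 0 < p := by linarith
  set l : ℝ := ε ^ (1/p) with hl
  have hlpos : 0 < l := Real.rpow_pos_of_pos hε _
  refine ⟨l ^ (-r), Real.rpow_pos_of_pos hlpos _, fun x y hx hy => ?_⟩
  have conj : Real.HolderConjugate p r := by
    rw [Real.holderConjugate_iff]
    constructor
    · exact hp1
    · rw [hp]; field_simp; ring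
  have key := Real.young_inequality_of_nonneg (a := l * x ^ (r-1)) (b := y / l)
    (mul_nonneg hlpos.le (Real.rpow_nonneg hx _)) (div_nonneg hy hlpos.le) conj
  have e0 : l * x ^ (r-1) * (y / l) = x ^ (r-1) * y := by
    field_simp
  have e1 : (l * x ^ (r-1)) ^ p = ε * x ^ r := by
    rw [Real.mul_rpow hlpos.le (Real.rpow_nonneg hx _), ← Real.rpow_mul hx]
    have e2 : (r-1) * p = r := by rw [hp]; field_simp
    have e3 : l ^ p = ε := by
      rw [hl, ← Real.rpow_mul hε.le]
      have : 1/p * p = 1 := by field_simp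
      rw [this, Real.rpow_one]
    rw [e2, e3]
  have e4 : (y / l) ^ r = l ^ (-r) * y ^ r := by
    rw [Real.div_rpow hy hlpos.le, Real.rpow_neg hlpos.le]
    ring
  calc x ^ (r-1) * y = l * x ^ (r-1) * (y / l) := e0.symm
    _ ≤ (l * x ^ (r-1)) ^ p / p + (y / l) ^ r / r := key
    _ ≤ (l * x ^ (r-1)) ^ p + (y / l) ^ r := by
        have h1 : 0 ≤ (l * x ^ (r-1)) ^ p :=
          Real.rpow_nonneg (mul_nonneg hlpos.le (Real.rpow_nonneg hx _)) _
        have h2 : 0 ≤ (y / l) ^ r := Real.rpow_nonneg (div_nonneg hy hlpos.le) _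
        have := div_le_self h1 hp1.le
        have := div_le_self h2 hr.le
        linarith
    _ = ε * x ^ r + l ^ (-r) * y ^ r := by rw [e1, e4]

set_option maxHeartbeats 2000000 in
/-- Abstract differential-inequality mechanism behind Case 1 of Theorem 3. -/
theorem stmt_9 (r α₁ C₀ β₁ β₂ : ℝ) (hr : 1 < r) (hα₁ : 0 < α₁) (hC₀ : 0 < C₀)
    (hβ₁ : 0 < β₁) (hβ₂ : 0 < β₂)
    (E E' ξ h I I' : ℝ → ℝ)
    (hEnonneg : ∀ t, 0 ≤ t → 0 ≤ E t)
    (hEanti : AntitoneOn E (Set.Ici 0))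
    (hEderiv : ∀ t ∈ Set.Ici (0:ℝ), HasDerivWithinAt E (E' t) (Set.Ici 0) t)
    (hE'cont : ContinuousOn E' (Set.Ici 0))
    (hξpos : ∀ t, 0 ≤ t → 0 < ξ t)
    (hξanti : AntitoneOn ξ (Set.Ici 0))
    (hξdiff : ∀ t ∈ Set.Ici (0:ℝ), DifferentiableWithinAt ℝ ξ (Set.Ici 0) t)
    (hhcont : ContinuousOn h (Set.Ici 0))
    (hhnonneg : ∀ t, 0 ≤ t → 0 ≤ h t)
    (hIderiv : ∀ t ∈ Set.Ici (0:ℝ), HasDerivWithinAt I (I' t) (Set.Ici 0) t)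
    (hIlow : ∀ t, 0 ≤ t → β₁ * E t ≤ I t)
    (hIhigh : ∀ t, 0 ≤ t → I t ≤ β₂ * E t)
    (hineq : ∀ t, 0 ≤ t →
      ξ t * I' t ≤ -α₁ * ξ t * E t + C₀ * (-(E' t)) ^ (1 / r) + C₀ * h t) :
    ∃ C > 0, ∀ t, 0 ≤ t →
      E t ≤ C * (1 + t) ^ (-(1 / (r - 1))) * (ξ t) ^ (-(r / (r - 1))) *
        (1 + ∫ s in (0:ℝ)..t,
              (1 + s) ^ (1 / (r - 1)) * (ξ s) ^ (r / (r - 1)) * (h s) ^ r) := by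
  have hr0 : (0:ℝ) < r := by linarith
  have hr1 : (0:ℝ) < r - 1 := by linarith
  set γ : ℝ := 1 / (r - 1) with hγdef
  set σ : ℝ := r / (r - 1) with hσdef
  have hγ : 0 < γ := by rw [hγdef]; positivity
  have hσ : 0 < σ := by rw [hσdef]; positivity
  set w : ℝ → ℝ := fun s => (1 + s) ^ γ * ξ s ^ σ * h s ^ r with hwdef
  set H : ℝ → ℝ := fun u => ∫ s in (0:ℝ)..u, w s with hHdef
  clear_value γ σ w H
  -- nonnegativity of the integrand and of H
  have hwnonneg : ∀ x, 0 ≤ x → 0 ≤ w x := by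
    intro x hx
    simp only [hwdef]
    exact mul_nonneg (mul_nonneg (Real.rpow_nonneg (by linarith) _)
      (Real.rpow_nonneg (hξpos x hx).le _)) (Real.rpow_nonneg (hhnonneg x hx) _)
  have hHnonneg : ∀ x, 0 ≤ x → 0 ≤ H x := by
    intro x hx
    simp only [hHdef]
    exact intervalIntegral.integral_nonneg hx (fun u hu => hwnonneg u hu.1)
  -- the goal for a fixed t, rephrased
  have goal_shape : ∀ C t, 0 ≤ t → (E t ≤ C * (1 + t) ^ (-γ) * ξ t ^ (-σ) * (1 + H t)) →
      E t ≤ C * (1 + t) ^ (-γ) * (ξ t) ^ (-σ) * (1 + ∫ s in (0:ℝ)..t, w s) := by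
    intro C t _ hle
    simp only [hHdef] at hle
    exact hle
  -- trivial bound when E t = 0
  have triv : ∀ C t, 0 < C → 0 ≤ t → E t = 0 →
      E t ≤ C * (1 + t) ^ (-γ) * ξ t ^ (-σ) * (1 + H t) := by
    intro C t hC ht hEt
    rw [hEt]
    have h1 : 0 ≤ (1 + t) ^ (-γ) := Real.rpow_nonneg (by linarith) _
    have h2 : 0 ≤ ξ t ^ (-σ) := Real.rpow_nonneg (hξpos t ht).le _
    have h3 : 0 ≤ 1 + H t := by linarith [hHnonneg t ht]
    positivity
  by_cases hE0 : E 0 = 0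
  · refine ⟨1, one_pos, fun t ht => ?_⟩
    apply goal_shape 1 t ht
    apply triv 1 t one_pos ht
    have h1 : E t ≤ E 0 := hEanti (self_mem_Ici) (mem_Ici.2 ht) ht
    have h2 : 0 ≤ E t := hEnonneg t ht
    rw [hE0] at h1; linarith
  have hE0pos : 0 < E 0 := (hEnonneg 0 le_rfl).lt_of_ne (Ne.symm hE0)
  have hξ0 : 0 < ξ 0 := hξpos 0 le_rfl
  -- Young constant
  obtain ⟨K₁, hK₁pos, hyoung⟩ := aux_young hr (show (0:ℝ) < α₁ / (4 * C₀) by positivity)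
  set D : ℝ := C₀ * K₁ with hDdef
  clear_value D
  have hDpos : 0 < D := by rw [hDdef]; positivity
  set c2 : ℝ := β₂ * ξ 0 ^ r * E 0 ^ (r-1) + D with hc2def
  clear_value c2
  have hc2 : 0 < c2 := by
    have h1 : 0 < ξ 0 ^ r := Real.rpow_pos_of_pos hξ0 _
    have h2 : 0 < E 0 ^ (r-1) := Real.rpow_pos_of_pos hE0pos _
    rw [hc2def]; positivity
  set c3 : ℝ := (α₁ / 2) / c2 ^ r with hc3def
  clear_value c3
  have hc2r : 0 < c2 ^ r := Real.rpow_pos_of_pos hc2 _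
  have hc3 : 0 < c3 := by rw [hc3def]; positivity
  set G : ℝ → ℝ := fun s => ξ s ^ r * E s ^ (r-1) * I s + D * E s with hGdef
  set K0 : ℝ := ((γ + 1) / c3) ^ (1 / (r-1)) with hK0def
  clear_value G K0
  have hK0pos : 0 < K0 := by
    rw [hK0def]
    exact Real.rpow_pos_of_pos (by positivity) _
  have hK0key : c3 * K0 ^ (r-1) = γ + 1 := by
    rw [hK0def, ← Real.rpow_mul (by positivity)]
    rw [show 1 / (r-1) * (r-1) = 1 by field_simp, Real.rpow_one]
    field_simp
  set K : ℝ := max (max K0 D) (G 0 * ξ 0 ^ σ) with hKdef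
  clear_value K
  have hKK0 : K0 ≤ K := by
    rw [hKdef]; exact le_trans (le_max_left _ _) (le_max_left _ _)
  have hKD : D ≤ K := by
    rw [hKdef]; exact le_trans (le_max_right _ _) (le_max_left _ _)
  have hKG0 : G 0 * ξ 0 ^ σ ≤ K := by
    rw [hKdef]; exact le_max_right _ _
  have hKpos : 0 < K := lt_of_lt_of_le hK0pos hKK0
  have hKkey : γ < c3 * K ^ (r-1) := by
    have h1 : K0 ^ (r-1) ≤ K ^ (r-1) := Real.rpow_le_rpow hK0pos.le hKK0 hr1.le
    have h2 : c3 * K0 ^ (r-1) ≤ c3 * K ^ (r-1) := mul_le_mul_of_nonneg_left h1 hc3.le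
    linarith [hK0key, h2, hγ]
  refine ⟨K / D, by positivity, fun t ht => ?_⟩
  apply goal_shape _ t ht
  by_cases hEt0 : E t = 0
  · exact triv _ t (by positivity) ht hEt0
  have hEtpos : 0 < E t := (hEnonneg t ht).lt_of_ne (Ne.symm hEt0)
  have hEpos : ∀ x ∈ Icc (0:ℝ) t, 0 < E x := fun x hx =>
    lt_of_lt_of_le hEtpos (hEanti (mem_Ici.2 hx.1) (mem_Ici.2 ht) hx.2)
  -- derivative sign facts
  have hE'le : ∀ x, 0 ≤ x → E' x ≤ 0 := fun x hx =>
    aux_deriv_nonpos hx (hEderiv x hx) hEanti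
  set ξd : ℝ → ℝ := fun x => derivWithin ξ (Set.Ici 0) x with hξddef
  clear_value ξd
  have hξdim : ∀ x, 0 ≤ x → HasDerivWithinAt ξ (ξd x) (Set.Ici 0) x := by
    intro x hx
    simp only [hξddef]
    exact (hξdiff x hx).hasDerivWithinAt
  have hξdle : ∀ x, 0 ≤ x → ξd x ≤ 0 := fun x hx =>
    aux_deriv_nonpos hx (hξdim x hx) hξanti
  -- continuity and FTC facts for w, H
  have hξcont : ContinuousOn ξ (Ici 0) := fun x hx => (hξdiff x hx).continuousWithinAt
  have hwcont : ContinuousOn w (Ici 0) := by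
    rw [hwdef]
    apply ContinuousOn.mul
    apply ContinuousOn.mul
    · exact (continuousOn_const.add continuousOn_id).rpow_const
        (fun x hx => Or.inl (by simp only [mem_Ici] at hx; exact ne_of_gt (show (0:ℝ) < 1 + x by linarith)))
    · exact hξcont.rpow_const fun x hx => Or.inl (ne_of_gt (hξpos x hx))
    · exact hhcont.rpow_const fun x _ => Or.inr hr0.le
  have hwint : ∀ x, 0 ≤ x → IntervalIntegrable w volume 0 x := fun x hx =>
    (hwcont.mono (by rw [uIcc_of_le hx]; exact Icc_subset_Ici_self)).intervalIntegrable
  have hHcont : ContinuousOn H (Icc 0 t) := by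
    have h1 : IntegrableOn w (uIcc 0 t) volume := by
      rw [uIcc_of_le ht]
      exact (hwcont.mono Icc_subset_Ici_self).integrableOn_Icc
    have h2 := intervalIntegral.continuousOn_primitive_interval h1
    rw [uIcc_of_le ht] at h2
    rw [hHdef]
    exact h2
  have hHderiv : ∀ x ∈ Ico (0:ℝ) t, HasDerivWithinAt H (w x) (Ici x) x := by
    intro x hx
    have hmeas : StronglyMeasurableAtFilter w (nhdsWithin x (Ioi x)) volume :=
      (hwcont.stronglyMeasurableAtFilter_nhdsWithin measurableSet_Ici x).filter_mono
        (nhdsWithin_mono x (fun y hy => le_trans hx.1 (le_of_lt hy)))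
    rw [hHdef]
    exact intervalIntegral.integral_hasDerivWithinAt_right (hwint x hx.1) hmeas
      ((hwcont x hx.1).mono (fun y hy => le_trans hx.1 (le_of_lt hy)))
  -- the Lyapunov function G and its derivative
  set G' : ℝ → ℝ := fun x =>
    ((ξd x * r * ξ x ^ (r-1)) * E x ^ (r-1) + ξ x ^ r * (E' x * (r-1) * E x ^ (r-1-1))) * I x
      + (ξ x ^ r * E x ^ (r-1)) * I' x + D * E' x with hG'def
  clear_value G'
  have hGd : ∀ x ∈ Icc (0:ℝ) t, HasDerivWithinAt G (G' x) (Ici 0) x := by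
    intro x hx
    simp only [hGdef, hG'def]
    have p1 := (hξdim x hx.1).rpow_const (p := r) (Or.inl (ne_of_gt (hξpos x hx.1)))
    have p2 := (hEderiv x hx.1).rpow_const (p := r-1) (Or.inl (ne_of_gt (hEpos x hx)))
    have p3 := hIderiv x hx.1
    have p4 := (hEderiv x hx.1).const_mul D
    exact ((p1.mul p2).mul p3).add p4
  have hI0 : ∀ x ∈ Icc (0:ℝ) t, 0 ≤ I x := fun x hx =>
    le_trans (mul_nonneg hβ₁.le (hEnonneg x hx.1)) (hIlow x hx.1)
  -- the key differential inequality for G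
  have hG'le : ∀ x ∈ Ico (0:ℝ) t, G' x ≤ -c3 * ξ x ^ r * G x ^ r + D * h x ^ r := by
    intro x hx
    have hx' : x ∈ Icc (0:ℝ) t := Ico_subset_Icc_self hx
    have hx0 : (0:ℝ) ≤ x := hx.1
    have hapos : 0 < ξ x := hξpos x hx0
    have hbpos : 0 < E x := hEpos x hx'
    have hE'x : E' x ≤ 0 := hE'le x hx0
    have hξdx : ξd x ≤ 0 := hξdle x hx0
    have har : ξ x ^ r = ξ x ^ (r-1) * ξ x := by
      have hh := Real.rpow_add hapos (r-1) 1
      rw [Real.rpow_one] at hh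
      rw [← hh]; congr 1; ring
    have hbr : E x ^ r = E x ^ (r-1) * E x := by
      have hh := Real.rpow_add hbpos (r-1) 1
      rw [Real.rpow_one] at hh
      rw [← hh]; congr 1; ring
    -- sign of the first two terms
    have h1 : ξd x * r * ξ x ^ (r-1) * E x ^ (r-1) ≤ 0 :=
      mul_nonpos_of_nonpos_of_nonneg
        (mul_nonpos_of_nonpos_of_nonneg
          (mul_nonpos_of_nonpos_of_nonneg hξdx hr0.le) (Real.rpow_nonneg hapos.le _))
        (Real.rpow_nonneg hbpos.le _)
    have h2 : ξ x ^ r * (E' x * (r-1) * E x ^ (r-1-1)) ≤ 0 :=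
      mul_nonpos_of_nonneg_of_nonpos (Real.rpow_nonneg hapos.le _)
        (mul_nonpos_of_nonpos_of_nonneg
          (mul_nonpos_of_nonpos_of_nonneg hE'x hr1.le) (Real.rpow_nonneg hbpos.le _))
    have t1 : ((ξd x * r * ξ x ^ (r-1)) * E x ^ (r-1)
        + ξ x ^ r * (E' x * (r-1) * E x ^ (r-1-1))) * I x ≤ 0 :=
      mul_nonpos_of_nonpos_of_nonneg (by linarith) (hI0 x hx')
    -- Young estimates
    have hm : 0 ≤ ξ x ^ (r-1) * E x ^ (r-1) :=
      mul_nonneg (Real.rpow_nonneg hapos.le _) (Real.rpow_nonneg hbpos.le _)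
    have e5 : (ξ x * E x) ^ (r-1) = ξ x ^ (r-1) * E x ^ (r-1) :=
      Real.mul_rpow hapos.le hbpos.le
    have e6 : (ξ x * E x) ^ r = ξ x ^ r * E x ^ r := Real.mul_rpow hapos.le hbpos.le
    have e7 : ((-(E' x)) ^ (1/r)) ^ r = -(E' x) := by
      rw [← Real.rpow_mul (by linarith), one_div, inv_mul_cancel₀ (ne_of_gt hr0),
        Real.rpow_one]
    have hXY1 := hyoung (ξ x * E x) ((-(E' x)) ^ (1/r)) (mul_nonneg hapos.le hbpos.le)
      (Real.rpow_nonneg (by linarith) _)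
    have hXY2 := hyoung (ξ x * E x) (h x) (mul_nonneg hapos.le hbpos.le) (hhnonneg x hx0)
    rw [e5, e6, e7] at hXY1
    rw [e5, e6] at hXY2
    have key1 : (ξ x ^ r * E x ^ (r-1)) * I' x
        ≤ -(α₁/2) * (ξ x ^ r * E x ^ r) + D * (-(E' x)) + D * h x ^ r := by
      have step1 : (ξ x ^ r * E x ^ (r-1)) * I' x
          = (ξ x ^ (r-1) * E x ^ (r-1)) * (ξ x * I' x) := by rw [har]; ring
      have step2 := mul_le_mul_of_nonneg_left (hineq x hx0) hm
      have step3 : (ξ x ^ (r-1) * E x ^ (r-1))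
            * (-α₁ * ξ x * E x + C₀ * (-(E' x)) ^ (1/r) + C₀ * h x)
          = -α₁ * (ξ x ^ r * E x ^ r)
            + C₀ * ((ξ x ^ (r-1) * E x ^ (r-1)) * (-(E' x)) ^ (1/r))
            + C₀ * ((ξ x ^ (r-1) * E x ^ (r-1)) * h x) := by
        rw [har, hbr]; ring
      have step4 := mul_le_mul_of_nonneg_left hXY1 hC₀.le
      have step5 := mul_le_mul_of_nonneg_left hXY2 hC₀.le
      have hCc : C₀ * (α₁ / (4 * C₀)) = α₁ / 4 := by field_simp
      rw [step1]
      calc (ξ x ^ (r-1) * E x ^ (r-1)) * (ξ x * I' x)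
          ≤ (ξ x ^ (r-1) * E x ^ (r-1))
            * (-α₁ * ξ x * E x + C₀ * (-(E' x)) ^ (1/r) + C₀ * h x) := step2
        _ = -α₁ * (ξ x ^ r * E x ^ r)
            + C₀ * ((ξ x ^ (r-1) * E x ^ (r-1)) * (-(E' x)) ^ (1/r))
            + C₀ * ((ξ x ^ (r-1) * E x ^ (r-1)) * h x) := step3
        _ ≤ -α₁ * (ξ x ^ r * E x ^ r)
            + C₀ * (α₁ / (4 * C₀) * (ξ x ^ r * E x ^ r) + K₁ * (-(E' x)))
            + C₀ * (α₁ / (4 * C₀) * (ξ x ^ r * E x ^ r) + K₁ * h x ^ r) := by linarith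
        _ = -(α₁/2) * (ξ x ^ r * E x ^ r) + D * (-(E' x)) + D * h x ^ r := by
            rw [hDdef]
            field_simp
            ring
    -- combine: G' x ≤ -(α₁/2) ξ^r E^r + D h^r
    have hG'mid : G' x ≤ -(α₁/2) * (ξ x ^ r * E x ^ r) + D * h x ^ r := by
      simp only [hG'def]
      have : D * E' x + D * (-(E' x)) = 0 := by ring
      linarith
    -- G ≤ c2 E
    have hξle : ξ x ≤ ξ 0 := hξanti self_mem_Ici (mem_Ici.2 hx0) hx0
    have hEle : E x ≤ E 0 := hEanti self_mem_Ici (mem_Ici.2 hx0) hx0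
    have hξr : ξ x ^ r ≤ ξ 0 ^ r := Real.rpow_le_rpow hapos.le hξle hr0.le
    have hEr : E x ^ (r-1) ≤ E 0 ^ (r-1) := Real.rpow_le_rpow hbpos.le hEle hr1.le
    have stepA : ξ x ^ r * E x ^ (r-1) ≤ ξ 0 ^ r * E 0 ^ (r-1) :=
      mul_le_mul hξr hEr (Real.rpow_nonneg hbpos.le _) (Real.rpow_nonneg hξ0.le _)
    have stepB : (ξ x ^ r * E x ^ (r-1)) * I x ≤ (ξ 0 ^ r * E 0 ^ (r-1)) * (β₂ * E x) :=
      mul_le_mul stepA (hIhigh x hx0) (hI0 x hx')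
        (mul_nonneg (Real.rpow_nonneg hξ0.le _) (Real.rpow_nonneg hE0pos.le _))
    have hGc2 : G x ≤ c2 * E x := by
      simp only [hGdef]
      rw [hc2def]
      linarith [stepB]
    have hGnonneg : 0 ≤ G x := by
      simp only [hGdef]
      have hq1 := mul_nonneg (mul_nonneg (Real.rpow_nonneg hapos.le r)
        (Real.rpow_nonneg hbpos.le (r-1))) (hI0 x hx')
      have hq2 := mul_nonneg hDpos.le hbpos.le
      linarith [hq1, hq2]
    have hGr : G x ^ r ≤ c2 ^ r * E x ^ r := by
      have h9 := Real.rpow_le_rpow hGnonneg hGc2 hr0.le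
      rwa [Real.mul_rpow hc2.le hbpos.le] at h9
    have hcc : c3 * c2 ^ r = α₁ / 2 := by
      rw [hc3def]; field_simp
    have h10 : (c3 * ξ x ^ r) * (G x ^ r) ≤ (c3 * ξ x ^ r) * (c2 ^ r * E x ^ r) :=
      mul_le_mul_of_nonneg_left hGr (mul_nonneg hc3.le (Real.rpow_nonneg hapos.le _))
    have h11 : (c3 * ξ x ^ r) * (c2 ^ r * E x ^ r) = (α₁/2) * (ξ x ^ r * E x ^ r) := by
      rw [← hcc]; ring
    linarith only [h10, h11, hG'mid]
  -- the supersolution ψ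
  set ψ : ℝ → ℝ := fun s => K * ((1+s) ^ (-γ) * (ξ s ^ (-σ) * (1 + H s))) with hψdef
  set ψ' : ℝ → ℝ := fun x =>
    K * ((1 * -γ * (1+x) ^ (-γ-1)) * (ξ x ^ (-σ) * (1 + H x))
      + (1+x) ^ (-γ) * ((ξd x * -σ * ξ x ^ (-σ-1)) * (1 + H x) + ξ x ^ (-σ) * w x))
    with hψ'def
  clear_value ψ ψ'
  have hψderiv : ∀ x ∈ Ico (0:ℝ) t, HasDerivWithinAt ψ (ψ' x) (Ici x) x := by
    intro x hx
    have q1 : HasDerivWithinAt (fun s => (1+s) ^ (-γ)) (1 * -γ * (1+x) ^ (-γ-1))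
        (Ici x) x :=
      ((hasDerivWithinAt_id x (Ici x)).const_add 1).rpow_const
        (Or.inl (by have := hx.1; positivity))
    have q2 : HasDerivWithinAt (fun s => ξ s ^ (-σ)) (ξd x * -σ * ξ x ^ (-σ-1))
        (Ici x) x :=
      ((hξdim x hx.1).mono (Ici_subset_Ici.mpr hx.1)).rpow_const
        (Or.inl (ne_of_gt (hξpos x hx.1)))
    have q3 : HasDerivWithinAt (fun s => 1 + H s) (w x) (Ici x) x :=
      (hHderiv x hx).const_add 1
    simp only [hψdef, hψ'def]
    exact (q1.mul (q2.mul q3)).const_mul K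
  have hψcont : ContinuousOn ψ (Icc 0 t) := by
    rw [hψdef]
    apply continuousOn_const.mul
    apply ContinuousOn.mul
    · exact (continuousOn_const.add continuousOn_id).rpow_const
        (fun x hx => Or.inl (by have := hx.1; exact ne_of_gt (show (0:ℝ) < 1 + x by linarith)))
    · exact ((hξcont.mono Icc_subset_Ici_self).rpow_const
        (fun x hx => Or.inl (ne_of_gt (hξpos x hx.1)))).mul
        (continuousOn_const.add hHcont)
  have hGcont : ContinuousOn G (Icc 0 t) := fun x hx =>
    ((hGd x hx).continuousWithinAt).mono Icc_subset_Ici_self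
  have hG'Ico : ∀ x ∈ Ico (0:ℝ) t, HasDerivWithinAt G (G' x) (Ici x) x := fun x hx =>
    (hGd x (Ico_subset_Icc_self hx)).mono (Ici_subset_Ici.mpr hx.1)
  -- initial condition
  have ha0 : G 0 ≤ ψ 0 := by
    have hH0 : H 0 = 0 := by
      simp only [hHdef]
      exact intervalIntegral.integral_same
    have hψ0 : ψ 0 = K * ξ 0 ^ (-σ) := by
      simp only [hψdef, hH0]
      norm_num [Real.one_rpow]
    have hcancel : ξ 0 ^ σ * ξ 0 ^ (-σ) = 1 := by
      rw [← Real.rpow_add hξ0]; norm_num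
    have := mul_le_mul_of_nonneg_right hKG0 (Real.rpow_nonneg hξ0.le (-σ))
    rw [hψ0]
    calc G 0 = G 0 * (ξ 0 ^ σ * ξ 0 ^ (-σ)) := by rw [hcancel]; ring
      _ = G 0 * ξ 0 ^ σ * ξ 0 ^ (-σ) := by ring
      _ ≤ K * ξ 0 ^ (-σ) := this
  -- the strict fencing bound
  have bound : ∀ x ∈ Ico (0:ℝ) t, G x = ψ x → G' x < ψ' x := by
    intro x hx hGψ
    have hx0 : (0:ℝ) ≤ x := hx.1
    have h1x : (0:ℝ) < 1 + x := by linarith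
    have h1H : (1:ℝ) ≤ 1 + H x := by linarith [hHnonneg x hx0]
    have hξx : 0 < ξ x := hξpos x hx0
    have hApos : 0 < (1+x) ^ (-γ-1) * (ξ x ^ (-σ) * (1 + H x)) :=
      mul_pos (Real.rpow_pos_of_pos h1x _)
        (mul_pos (Real.rpow_pos_of_pos hξx _) (by linarith))
    -- lower bound for ψ'
    have c1 : (1+x) ^ (-γ) * (1+x) ^ γ = 1 := by
      rw [← Real.rpow_add h1x]; norm_num
    have c2' : ξ x ^ (-σ) * ξ x ^ σ = 1 := by
      rw [← Real.rpow_add hξx]; norm_num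
    have e1 : (1+x) ^ (-γ) * (ξ x ^ (-σ) * w x) = h x ^ r := by
      calc (1+x) ^ (-γ) * (ξ x ^ (-σ) * w x)
          = ((1+x) ^ (-γ) * (1+x) ^ γ) * (ξ x ^ (-σ) * ξ x ^ σ) * h x ^ r := by
            simp only [hwdef]; ring
        _ = h x ^ r := by rw [c1, c2']; ring
    have e2 : 0 ≤ (1+x) ^ (-γ) * ((ξd x * -σ * ξ x ^ (-σ-1)) * (1 + H x)) := by
      have hs1 : 0 ≤ ξd x * -σ := mul_nonneg_of_nonpos_of_nonpos (hξdle x hx0) (by linarith)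
      exact mul_nonneg (Real.rpow_nonneg h1x.le _)
        (mul_nonneg (mul_nonneg hs1 (Real.rpow_nonneg hξx.le _)) (by linarith))
    have hψ'ge : K * (-γ * ((1+x) ^ (-γ-1) * (ξ x ^ (-σ) * (1 + H x))) + h x ^ r)
        ≤ ψ' x := by
      simp only [hψ'def]
      apply mul_le_mul_of_nonneg_left _ hKpos.le
      have expand : (1 * -γ * (1+x) ^ (-γ-1)) * (ξ x ^ (-σ) * (1 + H x))
          + (1+x) ^ (-γ) * ((ξd x * -σ * ξ x ^ (-σ-1)) * (1 + H x) + ξ x ^ (-σ) * w x)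
          = -γ * ((1+x) ^ (-γ-1) * (ξ x ^ (-σ) * (1 + H x)))
            + (1+x) ^ (-γ) * ((ξd x * -σ * ξ x ^ (-σ-1)) * (1 + H x))
            + (1+x) ^ (-γ) * (ξ x ^ (-σ) * w x) := by ring
      rw [expand, e1]
      linarith
    -- compute ξ^r ψ^r
    have eexp1 : -γ * r = -γ - 1 := by
      rw [hγdef]; field_simp; ring
    have eexp2 : r + -σ * r = -σ := by
      rw [hσdef]; field_simp; ring
    have hψnn1 : (0:ℝ) ≤ (1+x) ^ (-γ) := Real.rpow_nonneg h1x.le _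
    have hψnn2 : (0:ℝ) ≤ ξ x ^ (-σ) := Real.rpow_nonneg hξx.le _
    have hξψ : ξ x ^ r * ψ x ^ r
        = K ^ r * ((1+x) ^ (-γ-1) * (ξ x ^ (-σ) * (1 + H x) ^ r)) := by
      simp only [hψdef]
      rw [Real.mul_rpow hKpos.le (mul_nonneg hψnn1 (mul_nonneg hψnn2 (by linarith))),
        Real.mul_rpow hψnn1 (mul_nonneg hψnn2 (by linarith)),
        Real.mul_rpow hψnn2 (by linarith : (0:ℝ) ≤ 1 + H x),
        ← Real.rpow_mul h1x.le, ← Real.rpow_mul hξx.le, eexp1]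
      have hxi : ξ x ^ r * ξ x ^ (-σ * r) = ξ x ^ (-σ) := by
        rw [← Real.rpow_add hξx, eexp2]
      rw [← hxi]; ring
    have h1Hr : 1 + H x ≤ (1 + H x) ^ r := by
      have hh := Real.rpow_le_rpow_of_exponent_le h1H hr.le
      rwa [Real.rpow_one] at hh
    have hGf := hG'le x hx
    rw [hGψ] at hGf
    have hA'A : (1+x) ^ (-γ-1) * (ξ x ^ (-σ) * (1 + H x))
        ≤ (1+x) ^ (-γ-1) * (ξ x ^ (-σ) * (1 + H x) ^ r) :=
      mul_le_mul_of_nonneg_left (mul_le_mul_of_nonneg_left h1Hr hψnn2)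
        (Real.rpow_nonneg h1x.le _)
    have hKrpos : 0 ≤ K ^ r := Real.rpow_nonneg hKpos.le _
    have s1 : -c3 * (ξ x ^ r * ψ x ^ r)
        ≤ -(c3 * K ^ r) * ((1+x) ^ (-γ-1) * (ξ x ^ (-σ) * (1 + H x))) := by
      rw [hξψ]
      have hq := mul_le_mul_of_nonneg_left hA'A (mul_nonneg hc3.le hKrpos)
      linarith [hq]
    have hKr : K ^ r = K ^ (r-1) * K := by
      have hh := Real.rpow_add hKpos (r-1) 1
      rw [Real.rpow_one] at hh
      rw [← hh]; congr 1; ring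
    have s2 : (γ * K) * ((1+x) ^ (-γ-1) * (ξ x ^ (-σ) * (1 + H x)))
        < (c3 * K ^ r) * ((1+x) ^ (-γ-1) * (ξ x ^ (-σ) * (1 + H x))) := by
      apply mul_lt_mul_of_pos_right _ hApos
      calc γ * K < (c3 * K ^ (r-1)) * K := mul_lt_mul_of_pos_right hKkey hKpos
        _ = c3 * K ^ r := by rw [hKr]; ring
    have s3 : D * h x ^ r ≤ K * h x ^ r :=
      mul_le_mul_of_nonneg_right hKD (Real.rpow_nonneg (hhnonneg x hx0) _)
    have hfin : G' x < K * (-γ * ((1+x) ^ (-γ-1) * (ξ x ^ (-σ) * (1 + H x))) + h x ^ r) := by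
      have hexp : K * (-γ * ((1+x) ^ (-γ-1) * (ξ x ^ (-σ) * (1 + H x))) + h x ^ r)
          = -(γ*K) * ((1+x) ^ (-γ-1) * (ξ x ^ (-σ) * (1 + H x))) + K * h x ^ r := by ring
      rw [hexp]
      linarith [hGf, s1, s2, s3]
    exact lt_of_lt_of_le hfin hψ'ge
  -- comparison
  have hcomp := image_le_of_deriv_right_lt_deriv_boundary' hGcont hG'Ico ha0 hψcont
    hψderiv bound
  have hGt : G t ≤ ψ t := hcomp (Set.right_mem_Icc.mpr ht)
  have hI0t : 0 ≤ I t := le_trans (mul_nonneg hβ₁.le (hEnonneg t ht)) (hIlow t ht)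
  have hDE : D * E t ≤ G t := by
    simp only [hGdef]
    have hq := mul_nonneg (mul_nonneg (Real.rpow_nonneg (hξpos t ht).le r)
      (Real.rpow_nonneg (hEnonneg t ht) (r-1))) hI0t
    linarith
  have hψt : ψ t = K * ((1+t) ^ (-γ) * (ξ t ^ (-σ) * (1 + H t))) := by
    simp only [hψdef]
  rw [show K / D * (1+t) ^ (-γ) * ξ t ^ (-σ) * (1 + H t)
      = K * ((1+t) ^ (-γ) * (ξ t ^ (-σ) * (1 + H t))) / D from by ring]
  rw [le_div_iff₀ hDpos]
  rw [hψt] at hGt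
  linarith [hDE, hGt]
end
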